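/- arXiv:2004.14986 — 4 statements merged into one kernel-verified Lean document; each statement's English description precedes it below -/
import Mathlib

section
/- Let W, Z_q, Z_e, X be random variables with finite ranges on a common finite probability space. Assume: (independence) I(W ; (Z_q, Z_e)) = 0; (correctness) H(W | (X, Z_q)) = 0; and (security) I(W ; (X, Z_e)) = 0. Then H(W) ≤ H(Z_q | Z_e), where H(·|·) denotes conditional Shannon entropy. -/
open scoped BigOperators

/-- A finite probability space: a finite sample space `Ω` together with a
probability mass function `p`. -/
structure FinProbSpace : Type 1 where
  Ω : Type
  fin : Fintype Ω
  p : Ω → ℝ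
  nonneg : ∀ ω, 0 ≤ p ω
  sum_one : Finset.sum fin.elems p = 1

namespace FinProbSpace

/-- Probability that the random variable `X` takes the value `s`. -/
noncomputable def prob (μ : FinProbSpace) {S : Type} [DecidableEq S]
    (X : μ.Ω → S) (s : S) : ℝ :=
  letI := μ.fin
  ∑ ω : μ.Ω, if X ω = s then μ.p ω else 0

/-- Shannon entropy of a random variable with finite range. -/
noncomputable def H (μ : FinProbSpace) {S : Type} [Fintype S] [DecidableEq S]
    (X : μ.Ω → S) : ℝ :=
  ∑ s : S, Real.negMulLog (μ.prob X s)

/-- Conditional Shannon entropy `H(X | Y)`. -/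
noncomputable def Hc (μ : FinProbSpace) {S T : Type} [Fintype S] [DecidableEq S]
    [Fintype T] [DecidableEq T] (X : μ.Ω → S) (Y : μ.Ω → T) : ℝ :=
  μ.H (fun ω => (X ω, Y ω)) - μ.H Y

/-- Mutual information `I(X ; Y)`. -/
noncomputable def MI (μ : FinProbSpace) {S T : Type} [Fintype S] [DecidableEq S]
    [Fintype T] [DecidableEq T] (X : μ.Ω → S) (Y : μ.Ω → T) : ℝ :=
  μ.H X + μ.H Y - μ.H (fun ω => (X ω, Y ω))

/-- Conditional mutual information `I(X ; Y | Z)`. -/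
noncomputable def CMI (μ : FinProbSpace) {S T U : Type} [Fintype S] [DecidableEq S]
    [Fintype T] [DecidableEq T] [Fintype U] [DecidableEq U]
    (X : μ.Ω → S) (Y : μ.Ω → T) (Z : μ.Ω → U) : ℝ :=
  μ.H (fun ω => (X ω, Z ω)) + μ.H (fun ω => (Y ω, Z ω))
    - μ.H (fun ω => (X ω, Y ω, Z ω)) - μ.H Z

/-- Independence of two random variables: the joint pmf factorizes. -/
def IndepRV (μ : FinProbSpace) {S T : Type} [DecidableEq S] [DecidableEq T]
    (X : μ.Ω → S) (Y : μ.Ω → T) : Prop :=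
  ∀ s t, μ.prob (fun ω => (X ω, Y ω)) (s, t) = μ.prob X s * μ.prob Y t

attribute [local instance] FinProbSpace.fin

variable (μ : FinProbSpace)

lemma sum_p : ∑ ω : μ.Ω, μ.p ω = 1 := μ.sum_one

lemma prob_nonneg {S : Type} [DecidableEq S] (X : μ.Ω → S) (s : S) : 0 ≤ μ.prob X s := by
  refine Finset.sum_nonneg fun ω _ => ?_
  split <;> first | exact μ.nonneg ω | rfl

lemma prob_mono {S T : Type} [DecidableEq S] [DecidableEq T] (X : μ.Ω → S) (Y : μ.Ω → T)
    (s : S) (t : T) (h : ∀ ω, X ω = s → Y ω = t) : μ.prob X s ≤ μ.prob Y t := by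
  refine Finset.sum_le_sum fun ω _ => ?_
  by_cases hx : X ω = s
  · simp [hx, h ω hx]
  · simp only [hx, if_false]
    split <;> first | exact μ.nonneg ω | rfl

lemma p_le_prob {S : Type} [DecidableEq S] (X : μ.Ω → S) (ω : μ.Ω) :
    μ.p ω ≤ μ.prob X (X ω) := by
  have := Finset.single_le_sum (f := fun ω' => if X ω' = X ω then μ.p ω' else 0)
    (fun ω' _ => by split <;> first | exact μ.nonneg ω' | rfl) (Finset.mem_univ ω)
  simpa [prob] using this

lemma sum_prob_mul {S : Type} [Fintype S] [DecidableEq S] (X : μ.Ω → S) (f : S → ℝ) :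
    ∑ s : S, μ.prob X s * f s = ∑ ω : μ.Ω, μ.p ω * f (X ω) := by
  unfold prob
  simp_rw [Finset.sum_mul]
  rw [Finset.sum_comm]
  refine Finset.sum_congr rfl fun ω _ => ?_
  rw [show (∑ s : S, (if X ω = s then μ.p ω else 0) * f s)
        = ∑ s : S, (if X ω = s then μ.p ω * f s else 0) from
      Finset.sum_congr rfl fun s _ => by by_cases h : X ω = s <;> simp [h],
    Finset.sum_ite_eq Finset.univ (X ω) (fun s => μ.p ω * f s)]
  simp

lemma H_eq {S : Type} [Fintype S] [DecidableEq S] (X : μ.Ω → S) :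
    μ.H X = ∑ ω : μ.Ω, μ.p ω * (-Real.log (μ.prob X (X ω))) := by
  rw [H, ← sum_prob_mul μ X (fun s => -Real.log (μ.prob X s))]
  exact Finset.sum_congr rfl fun s _ => by rw [Real.negMulLog]; ring

lemma prob_comp {S T : Type} [DecidableEq S] [DecidableEq T]
    (X : μ.Ω → S) (i : S → T) (hi : Function.Injective i) (s : S) :
    μ.prob (fun ω => i (X ω)) (i s) = μ.prob X s := by
  unfold prob
  exact Finset.sum_congr rfl fun ω _ => by simp [hi.eq_iff]

lemma H_comp {S T : Type} [Fintype S] [DecidableEq S] [Fintype T] [DecidableEq T]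
    (X : μ.Ω → S) (i : S → T) (hi : Function.Injective i) :
    μ.H (fun ω => i (X ω)) = μ.H X := by
  rw [H_eq, H_eq]
  exact Finset.sum_congr rfl fun ω _ => by rw [prob_comp μ X i hi]

lemma prob_marginal_fst {S T : Type} [Fintype S] [DecidableEq S] [DecidableEq T]
    (X : μ.Ω → S) (Y : μ.Ω → T) (t : T) :
    ∑ s : S, μ.prob (fun ω => (X ω, Y ω)) (s, t) = μ.prob Y t := by
  unfold prob
  rw [Finset.sum_comm]
  refine Finset.sum_congr rfl fun ω _ => ?_
  by_cases h : Y ω = t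
  · simp only [Prod.mk.injEq, h, and_true]
    rw [Finset.sum_ite_eq Finset.univ (X ω) (fun _ => μ.p ω)]
    simp [h]
  · simp [Prod.ext_iff, h]

lemma H_mono {S T : Type} [Fintype S] [DecidableEq S] [Fintype T] [DecidableEq T]
    (X : μ.Ω → S) (Y : μ.Ω → T) :
    μ.H Y ≤ μ.H (fun ω => (X ω, Y ω)) := by
  rw [H_eq, H_eq]
  refine Finset.sum_le_sum fun ω _ => ?_
  rcases eq_or_lt_of_le (μ.nonneg ω) with h0 | h0
  · rw [← h0]; simp
  · have hle : μ.prob (fun ω' => (X ω', Y ω')) (X ω, Y ω) ≤ μ.prob Y (Y ω) :=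
      prob_mono μ _ _ _ _ (fun ω' h => by
        have := congrArg Prod.snd h; simpa using this)
    have hpos : 0 < μ.prob (fun ω' => (X ω', Y ω')) (X ω, Y ω) :=
      lt_of_lt_of_le h0 (p_le_prob μ _ ω)
    have hlog : Real.log (μ.prob (fun ω' => (X ω', Y ω')) (X ω, Y ω)) ≤
        Real.log (μ.prob Y (Y ω)) := Real.log_le_log hpos hle
    nlinarith

lemma H_submod {S T U : Type} [Fintype S] [DecidableEq S] [Fintype T] [DecidableEq T]
    [Fintype U] [DecidableEq U] (A : μ.Ω → S) (B : μ.Ω → T) (C : μ.Ω → U) :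
    μ.H (fun ω => (A ω, (B ω, C ω))) + μ.H C
      ≤ μ.H (fun ω => (A ω, C ω)) + μ.H (fun ω => (B ω, C ω)) := by
  classical
  rw [H_eq μ (fun ω => (A ω, (B ω, C ω))), H_eq μ C, H_eq μ (fun ω => (A ω, C ω)),
    H_eq μ (fun ω => (B ω, C ω))]
  set PAC := μ.prob (fun ω => (A ω, C ω)) with hPAC
  set PBC := μ.prob (fun ω => (B ω, C ω)) with hPBC
  set PC := μ.prob C with hPC
  set PV := μ.prob (fun ω => (A ω, (B ω, C ω))) with hPV
  set q : S × T × U → ℝ := fun v =>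
    PAC (v.1, v.2.2) * PBC v.2 / (PV v * PC v.2.2) with hq
  have hone : ∑ c : U, PC c = 1 := by
    have h := sum_prob_mul μ C (fun _ => (1:ℝ))
    simp only [mul_one] at h
    rw [hPC, h]
    exact sum_p μ
  -- key bound : expected value of the ratio is at most 1
  have key : ∑ ω : μ.Ω, μ.p ω * q (A ω, (B ω, C ω)) ≤ 1 := by
    have h := sum_prob_mul μ (fun ω => (A ω, (B ω, C ω))) q
    rw [← h, ← hPV]
    have hbound : ∀ v : S × T × U,
        PV v * q v ≤ if PC v.2.2 = 0 then 0 else PAC (v.1, v.2.2) * PBC v.2 / PC v.2.2 := by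
      rintro ⟨a, b, c⟩
      rcases eq_or_lt_of_le (prob_nonneg μ (fun ω => (A ω, (B ω, C ω))) (a, b, c)) with h0 | h0
      · have hz : PV (a, b, c) = 0 := by rw [hPV]; exact h0.symm
        rw [hz, zero_mul]
        split
        · rfl
        · exact div_nonneg (mul_nonneg (prob_nonneg μ _ _) (prob_nonneg μ _ _))
            (prob_nonneg μ _ _)
      · have h0' : 0 < PV (a, b, c) := by rw [hPV]; exact h0
        have hc : PV (a, b, c) ≤ PC c :=
          prob_mono μ _ _ _ _ (fun ω h => by
            have := congrArg (fun x : S × T × U => x.2.2) h; simpa using this)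
        have hcpos : 0 < PC c := lt_of_lt_of_le h0' hc
        rw [if_neg (ne_of_gt hcpos), hq]
        simp only
        rw [show PV (a, b, c) * (PAC (a, c) * PBC (b, c) / (PV (a, b, c) * PC c))
              = PAC (a, c) * PBC (b, c) / PC c from by
          field_simp]
    have hGsum : ∑ v : S × T × U,
        (if PC v.2.2 = 0 then 0 else PAC (v.1, v.2.2) * PBC v.2 / PC v.2.2)
        = ∑ c : U, PC c := by
      rw [Fintype.sum_prod_type]
      simp_rw [Fintype.sum_prod_type]
      have h1 : ∀ a : S, (∑ b : T, ∑ c : U,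
          (if PC c = 0 then 0 else PAC (a, c) * PBC (b, c) / PC c))
          = ∑ c : U, ∑ b : T, (if PC c = 0 then 0 else PAC (a, c) * PBC (b, c) / PC c) :=
        fun a => Finset.sum_comm
      simp_rw [h1]
      rw [Finset.sum_comm]
      refine Finset.sum_congr rfl fun c _ => ?_
      by_cases hc : PC c = 0
      · simp [hc]
      · simp only [if_neg hc]
        have e1 : ∑ a : S, PAC (a, c) = PC c := by
          rw [hPAC, hPC]; exact prob_marginal_fst μ A C c
        have e2 : ∑ b : T, PBC (b, c) = PC c := by
          rw [hPBC, hPC]; exact prob_marginal_fst μ B C c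
        calc ∑ a : S, ∑ b : T, PAC (a, c) * PBC (b, c) / PC c
            = (∑ a : S, PAC (a, c)) * (∑ b : T, PBC (b, c)) / PC c := by
              rw [Finset.sum_mul_sum, Finset.sum_div]
              refine Finset.sum_congr rfl fun a _ => ?_
              rw [Finset.sum_div]
          _ = PC c := by rw [e1, e2]; field_simp
    calc (∑ v : S × T × U, PV v * q v)
        ≤ ∑ v : S × T × U,
            (if PC v.2.2 = 0 then 0 else PAC (v.1, v.2.2) * PBC v.2 / PC v.2.2) :=
          Finset.sum_le_sum fun v _ => hbound v
      _ = ∑ c : U, PC c := hGsum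
      _ = 1 := hone
  -- termwise log bound
  have hterm : ∀ ω : μ.Ω,
      μ.p ω * (-Real.log (PV (A ω, (B ω, C ω)))) + μ.p ω * (-Real.log (PC (C ω)))
        ≤ μ.p ω * (-Real.log (PAC (A ω, C ω))) + μ.p ω * (-Real.log (PBC (B ω, C ω)))
          + (μ.p ω * q (A ω, (B ω, C ω)) - μ.p ω) := by
    intro ω
    rcases eq_or_lt_of_le (μ.nonneg ω) with h0 | h0
    · rw [← h0]; simp
    · have h1 : 0 < PAC (A ω, C ω) := lt_of_lt_of_le h0 (p_le_prob μ (fun ω' => (A ω', C ω')) ω)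
      have h2 : 0 < PBC (B ω, C ω) := lt_of_lt_of_le h0 (p_le_prob μ (fun ω' => (B ω', C ω')) ω)
      have h3 : 0 < PV (A ω, (B ω, C ω)) :=
        lt_of_lt_of_le h0 (p_le_prob μ (fun ω' => (A ω', (B ω', C ω'))) ω)
      have h4 : 0 < PC (C ω) := lt_of_lt_of_le h0 (p_le_prob μ C ω)
      have hqpos : 0 < q (A ω, (B ω, C ω)) := by
        rw [hq]; simp only
        exact div_pos (mul_pos h1 h2) (mul_pos h3 h4)
      have hlog := Real.log_le_sub_one_of_pos hqpos
      have hexp : Real.log (q (A ω, (B ω, C ω))) =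
          Real.log (PAC (A ω, C ω)) + Real.log (PBC (B ω, C ω))
            - (Real.log (PV (A ω, (B ω, C ω))) + Real.log (PC (C ω))) := by
        rw [hq]
        simp only
        rw [Real.log_div (mul_pos h1 h2).ne' (mul_pos h3 h4).ne', Real.log_mul h1.ne' h2.ne',
          Real.log_mul h3.ne' h4.ne']
      nlinarith [hlog, hexp, h0]
  calc (∑ ω : μ.Ω, μ.p ω * (-Real.log (PV (A ω, (B ω, C ω)))))
        + ∑ ω : μ.Ω, μ.p ω * (-Real.log (PC (C ω)))
      = ∑ ω : μ.Ω, (μ.p ω * (-Real.log (PV (A ω, (B ω, C ω))))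
          + μ.p ω * (-Real.log (PC (C ω)))) := (Finset.sum_add_distrib).symm
    _ ≤ ∑ ω : μ.Ω, (μ.p ω * (-Real.log (PAC (A ω, C ω)))
          + μ.p ω * (-Real.log (PBC (B ω, C ω)))
          + (μ.p ω * q (A ω, (B ω, C ω)) - μ.p ω)) :=
        Finset.sum_le_sum fun ω _ => hterm ω
    _ = (∑ ω : μ.Ω, μ.p ω * (-Real.log (PAC (A ω, C ω))))
          + (∑ ω : μ.Ω, μ.p ω * (-Real.log (PBC (B ω, C ω))))
          + ((∑ ω : μ.Ω, μ.p ω * q (A ω, (B ω, C ω))) - ∑ ω : μ.Ω, μ.p ω) := by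
        rw [Finset.sum_add_distrib, Finset.sum_add_distrib, Finset.sum_sub_distrib]
    _ ≤ (∑ ω : μ.Ω, μ.p ω * (-Real.log (PAC (A ω, C ω))))
          + ∑ ω : μ.Ω, μ.p ω * (-Real.log (PBC (B ω, C ω))) := by
        have hp := sum_p μ
        linarith [key]

end FinProbSpace

open FinProbSpace

/-- **Key-rate converse** (Theorem 1, first inequality). If the message `W` is
independent of the pair of keys `(Z_q, Z_e)`, correctness `H(W | (X, Z_q)) = 0`
holds and security `I(W ; (X, Z_e)) = 0` holds, then `H(W) ≤ H(Z_q | Z_e)`. -/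
theorem key_rate_converse
    (μ : FinProbSpace) {SW SZq SZe SX : Type}
    [Fintype SW] [DecidableEq SW] [Fintype SZq] [DecidableEq SZq]
    [Fintype SZe] [DecidableEq SZe] [Fintype SX] [DecidableEq SX]
    (W : μ.Ω → SW) (Zq : μ.Ω → SZq) (Ze : μ.Ω → SZe) (X : μ.Ω → SX)
    (hInd : μ.MI W (fun ω => (Zq ω, Ze ω)) = 0)
    (hCorr : μ.Hc W (fun ω => (X ω, Zq ω)) = 0)
    (hSec : μ.MI W (fun ω => (X ω, Ze ω)) = 0) :
    μ.H W ≤ μ.Hc Zq Ze := by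
  classical
  rw [MI] at hSec
  rw [Hc] at hCorr ⊢
  -- Step 1: security gives H(W,(X,Ze)) = H W + H(X,Ze)
  -- Step 2: monotonicity
  have h2 : μ.H (fun ω => (W ω, (X ω, Ze ω)))
      ≤ μ.H (fun ω => (Zq ω, (W ω, (X ω, Ze ω)))) :=
    H_mono μ Zq (fun ω => (W ω, (X ω, Ze ω)))
  -- Step 3: relabeling
  have hinj1 : Function.Injective
      (fun v : SW × SX × SZq × SZe => (v.2.2.1, (v.1, (v.2.1, v.2.2.2)))) := by
    rintro ⟨w, x, q, e⟩ ⟨w', x', q', e'⟩ h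
    simp_all [Prod.ext_iff]
  have hinj2 : Function.Injective
      (fun v : SW × SX × SZq × SZe => (v.2.2.2, (v.1, (v.2.1, v.2.2.1)))) := by
    rintro ⟨w, x, q, e⟩ ⟨w', x', q', e'⟩ h
    simp_all [Prod.ext_iff]
  have h3a : μ.H (fun ω => (Zq ω, (W ω, (X ω, Ze ω))))
      = μ.H (fun ω => (W ω, X ω, Zq ω, Ze ω)) :=
    H_comp μ (fun ω => (W ω, X ω, Zq ω, Ze ω))
      (fun v => (v.2.2.1, (v.1, (v.2.1, v.2.2.2)))) hinj1
  have h3b : μ.H (fun ω => (Ze ω, (W ω, (X ω, Zq ω))))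
      = μ.H (fun ω => (W ω, X ω, Zq ω, Ze ω)) :=
    H_comp μ (fun ω => (W ω, X ω, Zq ω, Ze ω))
      (fun v => (v.2.2.2, (v.1, (v.2.1, v.2.2.1)))) hinj2
  -- Step 4: submodularity with correctness
  have h4 : μ.H (fun ω => (Ze ω, (W ω, (X ω, Zq ω)))) + μ.H (fun ω => (X ω, Zq ω))
      ≤ μ.H (fun ω => (Ze ω, (X ω, Zq ω))) + μ.H (fun ω => (W ω, (X ω, Zq ω))) :=
    H_submod μ Ze W (fun ω => (X ω, Zq ω))
  -- Step 5: relabeling of the triple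
  have hinj3 : Function.Injective
      (fun v : SX × SZq × SZe => (v.2.2, (v.1, v.2.1))) := by
    rintro ⟨x, q, e⟩ ⟨x', q', e'⟩ h
    simp_all [Prod.ext_iff]
  have hinj4 : Function.Injective
      (fun v : SX × SZq × SZe => (v.2.1, (v.1, v.2.2))) := by
    rintro ⟨x, q, e⟩ ⟨x', q', e'⟩ h
    simp_all [Prod.ext_iff]
  have h5a : μ.H (fun ω => (Ze ω, (X ω, Zq ω)))
      = μ.H (fun ω => (X ω, Zq ω, Ze ω)) :=
    H_comp μ (fun ω => (X ω, Zq ω, Ze ω)) (fun v => (v.2.2, (v.1, v.2.1))) hinj3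
  have h5b : μ.H (fun ω => (Zq ω, (X ω, Ze ω)))
      = μ.H (fun ω => (X ω, Zq ω, Ze ω)) :=
    H_comp μ (fun ω => (X ω, Zq ω, Ze ω)) (fun v => (v.2.1, (v.1, v.2.2))) hinj4
  -- Step 6: final submodularity
  have h6 : μ.H (fun ω => (Zq ω, (X ω, Ze ω))) + μ.H Ze
      ≤ μ.H (fun ω => (Zq ω, Ze ω)) + μ.H (fun ω => (X ω, Ze ω)) :=
    H_submod μ Zq X Ze
  linarith
end

section
/- Let F be a field, N ≥ 1, and let v_e, v_{q_1}, …, v_{q_N} ∈ F. Let M be the (N+1) × (N+1) matrix over F whose first N rows form the banded matrix with M(i, i) = 1, M(i, i+1) = v_e, and all other entries 0 (for i = 1, …, N), and whose last row has j-th entry equal to the elementary symmetric polynomial e_{j−1}(v_{q_1}, …, v_{q_N}) of degree j − 1 (for j = 1, …, N+1, with e_0 = 1). Then det M = (−1)^N · ∏_{i=1}^{N} (v_e − v_{q_i}). In particular, if v_e is distinct from each v_{q_i}, then M is invertible. -/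
open scoped BigOperators

/-- The elementary symmetric polynomial `e_d(v_1, …, v_N)` evaluated at the
family `v : Fin N → F`: the sum over all `d`-element index subsets of the
product of the corresponding values, with `e_0 = 1`. -/
noncomputable def esym {N : ℕ} {F : Type} [CommRing F] (v : Fin N → F) (d : ℕ) : F :=
  ∑ t ∈ Finset.univ.powersetCard d, ∏ i ∈ t, v i

section Aux

variable {F : Type} [Field F] {N : ℕ}

/-- Key sum identity: `∑_j e_j(v) (-x)^{N-j} = (-1)^N ∏ (x - v i)`. -/
lemma esym_alt_sum (x : F) (v : Fin N → F) :
    ∑ j : Fin (N + 1), esym v (j : ℕ) * (-x) ^ (N - (j : ℕ))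
      = (-1 : F) ^ N * ∏ i : Fin N, (x - v i) := by
  classical
  have hrhs : (-1 : F) ^ N * ∏ i : Fin N, (x - v i) = ∏ i : Fin N, (v i + (-x)) := by
    rw [show ((-1 : F)) ^ N = ∏ _i : Fin N, (-1 : F) by simp, ← Finset.prod_mul_distrib]
    exact Finset.prod_congr rfl fun i _ => by ring
  rw [hrhs, Finset.prod_add]
  have hcard : (Finset.univ : Finset (Fin N)).card = N := by simp
  rw [Finset.sum_powerset]
  rw [hcard]
  rw [Fin.sum_univ_eq_sum_range (fun j => esym v j * (-x) ^ (N - j))]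
  apply Finset.sum_congr rfl
  intro j hj
  rw [esym, Finset.sum_mul]
  apply Finset.sum_congr rfl
  intro t ht
  have htc : t.card = j := (Finset.mem_powersetCard.mp ht).2
  have : (Finset.univ \ t).card = N - j := by
    rw [Finset.card_sdiff_of_subset (Finset.subset_univ t), hcard, htc]
  rw [Finset.prod_const, this]

end Aux

/-- **Determinant identity for the Matsumoto–Imai key assignment** (security core
of Theorem 2's achievability). The `(N+1) × (N+1)` matrix whose first `N` rows
are the banded rows `(…, 1, v_e, …)` and whose last row consists of the
elementary symmetric polynomials of `v_{q_1}, …, v_{q_N}` has determinant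
`(−1)^N · ∏_i (v_e − v_{q_i})`; in particular, it is invertible whenever `v_e`
differs from every `v_{q_i}`. -/
theorem matsumoto_imai_det {F : Type} [Field F] {N : ℕ} (hN : 1 ≤ N)
    (ve : F) (v : Fin N → F)
    (M : Matrix (Fin (N + 1)) (Fin (N + 1)) F)
    (hM : M = Matrix.of fun (i j : Fin (N + 1)) =>
      if (i : ℕ) < N then
        (if (j : ℕ) = (i : ℕ) then 1 else if (j : ℕ) = (i : ℕ) + 1 then ve else 0)
      else esym v (j : ℕ)) :
    M.det = (-1 : F) ^ N * ∏ i : Fin N, (ve - v i)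
      ∧ ((∀ i : Fin N, ve ≠ v i) → IsUnit M) := by
  classical
  set U : Matrix (Fin (N + 1)) (Fin (N + 1)) F :=
    Matrix.of (fun j k => if (j : ℕ) ≤ (k : ℕ) then (-ve) ^ ((k : ℕ) - (j : ℕ)) else 0)
    with hU
  -- U is upper triangular with 1's on the diagonal
  have hUdet : U.det = 1 := by
    rw [Matrix.det_of_upperTriangular]
    · apply Finset.prod_eq_one
      intro i _
      simp [hU]
    · intro i j hij
      have h : (j : ℕ) < (i : ℕ) := hij
      simp only [hU, Matrix.of_apply]
      rw [if_neg (by omega)]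
  -- entries of M * U in the first N rows
  have hMU : ∀ i k : Fin (N + 1), (i : ℕ) < N → (M * U) i k = if k = i then 1 else 0 := by
    intro i k hi
    have hi1 : (i : ℕ) + 1 < N + 1 := by omega
    set i' : Fin (N + 1) := ⟨(i : ℕ) + 1, hi1⟩ with hi'
    have hvi' : (i' : ℕ) = (i : ℕ) + 1 := rfl
    have hUapp : ∀ a b : Fin (N + 1),
        U a b = if (a : ℕ) ≤ (b : ℕ) then (-ve) ^ ((b : ℕ) - (a : ℕ)) else 0 := fun a b => rfl
    rw [Matrix.mul_apply]
    have hterm : ∀ j : Fin (N + 1), M i j * U j k =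
        (if j = i then U i k else 0) + (if j = i' then ve * U i' k else 0) := by
      intro j
      rw [hM]
      simp only [Matrix.of_apply, if_pos hi]
      by_cases h1 : j = i
      · subst h1
        rw [if_pos rfl, if_pos rfl, if_neg (by rw [Fin.ext_iff, hvi']; omega), one_mul, add_zero]
      · rw [if_neg h1]
        have h1' : (j : ℕ) ≠ (i : ℕ) := fun h => h1 (Fin.ext h)
        rw [if_neg h1']
        by_cases h2 : j = i'
        · subst h2
          simp [h1, hvi']
        · have h2' : (j : ℕ) ≠ (i : ℕ) + 1 := by
            intro h; exact h2 (Fin.ext (by simp [hi', h]))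
          rw [if_neg h2', if_neg h2, zero_mul, zero_add]
    rw [Finset.sum_congr rfl fun j _ => hterm j, Finset.sum_add_distrib,
      Fintype.sum_ite_eq' i (fun _ => U i k), Fintype.sum_ite_eq' i' (fun _ => ve * U i' k)]
    by_cases hk : k = i
    · subst hk
      rw [if_pos rfl, hUapp, hUapp]
      rw [if_pos (le_refl _), if_neg (by omega), Nat.sub_self, pow_zero, mul_zero, add_zero]
    · rw [if_neg hk]
      have hk' : (k : ℕ) ≠ (i : ℕ) := fun h => hk (Fin.ext h)
      rw [hUapp, hUapp]
      by_cases hlt : (k : ℕ) < (i : ℕ)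
      · rw [if_neg (by omega), if_neg (by omega), mul_zero, add_zero]
      · have hgt : (i : ℕ) < (k : ℕ) := by omega
        obtain ⟨m, hm⟩ : ∃ m, (k : ℕ) - (i : ℕ) = m + 1 := ⟨(k : ℕ) - (i : ℕ) - 1, by omega⟩
        have hm' : (k : ℕ) - ((i' : ℕ)) = m := by omega
        rw [if_pos (show (i : ℕ) ≤ (k : ℕ) by omega),
          if_pos (show (i' : ℕ) ≤ (k : ℕ) by omega), hm, hm', pow_succ]
        ring
  -- M * U is lower triangular
  have hLT : (M * U).BlockTriangular OrderDual.toDual := by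
    intro i j hij
    have h : (i : ℕ) < (j : ℕ) := hij
    rw [hMU i j (by omega), if_neg (by intro hh; subst hh; omega)]
  have hdiag : ∀ i : Fin N, (M * U) i.castSucc i.castSucc = 1 := by
    intro i
    rw [hMU _ _ (by simp), if_pos rfl]
  have hlast : (M * U) (Fin.last N) (Fin.last N)
      = ∑ j : Fin (N + 1), esym v (j : ℕ) * (-ve) ^ (N - (j : ℕ)) := by
    rw [Matrix.mul_apply]
    apply Finset.sum_congr rfl
    intro j _
    rw [hM]
    have hUapp : ∀ a b : Fin (N + 1),
        U a b = if (a : ℕ) ≤ (b : ℕ) then (-ve) ^ ((b : ℕ) - (a : ℕ)) else 0 := fun a b => rfl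
    simp only [Matrix.of_apply, hUapp, Fin.val_last]
    rw [if_neg (by omega), if_pos (by omega)]
  have hdet : M.det = (-1 : F) ^ N * ∏ i : Fin N, (ve - v i) := by
    have h1 : (M * U).det = M.det := by rw [Matrix.det_mul, hUdet, mul_one]
    have h2 : (M * U).det = ∑ j : Fin (N + 1), esym v (j : ℕ) * (-ve) ^ (N - (j : ℕ)) := by
      rw [Matrix.det_of_lowerTriangular _ hLT, Fin.prod_univ_castSucc]
      rw [Finset.prod_congr rfl fun i _ => hdiag i, Finset.prod_const_one, one_mul, hlast]
    rw [← h1, h2, esym_alt_sum]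
  refine ⟨hdet, fun hne => ?_⟩
  rw [Matrix.isUnit_iff_isUnit_det, hdet, isUnit_iff_ne_zero]
  apply mul_ne_zero
  · exact pow_ne_zero _ (by norm_num)
  · exact Finset.prod_ne_zero_iff.mpr fun i _ => sub_ne_zero.mpr (hne i)
end

section
/- Let F be a finite field, N ≥ 1, let s be uniformly distributed on F^{N+1}, let W be uniformly distributed on F, and suppose s and W are independent. Let v ∈ F^{1×(N+1)} be a row vector and A ∈ F^{N×(N+1)} a matrix such that the (N+1) × (N+1) matrix obtained by stacking A on top of v is invertible. Then I(W ; (W + v·sᵀ, A·sᵀ)) = 0; that is, W is independent of the pair consisting of the one-time-pad signal W + v·sᵀ and the eavesdropper's key A·sᵀ. -/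
open scoped BigOperators

open FinProbSpace

lemma sum_prob_eq_one (μ : FinProbSpace) {S : Type} [Fintype S] [DecidableEq S]
    (X : μ.Ω → S) : ∑ x : S, μ.prob X x = 1 := by
  letI := μ.fin
  have : ∑ x : S, μ.prob X x = ∑ ω : μ.Ω, ∑ x : S, (if X ω = x then μ.p ω else 0) := by
    rw [Finset.sum_comm]; rfl
  rw [this]
  have h2 : ∀ ω : μ.Ω, (∑ x : S, (if X ω = x then μ.p ω else 0)) = μ.p ω := by
    intro ω; simp
  simp only [h2]
  exact μ.sum_one

lemma prob_marginal (μ : FinProbSpace) {S T : Type} [Fintype S] [DecidableEq S]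
    [DecidableEq T] (X : μ.Ω → S) (Y : μ.Ω → T) (t : T) :
    μ.prob Y t = ∑ x : S, μ.prob (fun ω => (X ω, Y ω)) (x, t) := by
  letI := μ.fin
  have : ∑ x : S, μ.prob (fun ω => (X ω, Y ω)) (x, t)
      = ∑ ω : μ.Ω, ∑ x : S, (if (X ω, Y ω) = (x, t) then μ.p ω else 0) := by
    rw [Finset.sum_comm]; rfl
  rw [this]
  apply Finset.sum_congr rfl
  intro ω _
  by_cases h : Y ω = t
  · simp [prob, h, Prod.ext_iff]
  · simp [prob, h, Prod.ext_iff]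

lemma MI_eq_zero_of_indep (μ : FinProbSpace) {S T : Type} [Fintype S] [DecidableEq S]
    [Fintype T] [DecidableEq T] (X : μ.Ω → S) (Y : μ.Ω → T)
    (h : μ.IndepRV X Y) : μ.MI X Y = 0 := by
  have hpair : μ.H (fun ω => (X ω, Y ω)) = μ.H X + μ.H Y := by
    unfold FinProbSpace.H
    rw [Fintype.sum_prod_type]
    have : ∀ x : S, ∑ y : T, Real.negMulLog (μ.prob (fun ω => (X ω, Y ω)) (x, y))
        = (∑ y : T, μ.prob Y y) * Real.negMulLog (μ.prob X x)
          + μ.prob X x * ∑ y : T, Real.negMulLog (μ.prob Y y) := by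
      intro x
      rw [Finset.sum_mul, Finset.mul_sum, ← Finset.sum_add_distrib]
      apply Finset.sum_congr rfl
      intro y _
      rw [h x y, Real.negMulLog_mul]
    simp only [this, sum_prob_eq_one, one_mul]
    rw [Finset.sum_add_distrib, ← Finset.sum_mul, sum_prob_eq_one, one_mul]
  unfold FinProbSpace.MI
  rw [hpair]; ring

/-- **Security of linear one-time-pad schemes.** Let `s` be uniform on
`F^{N+1}`, `W` uniform on `F`, and `s, W` independent. If stacking the
eavesdropper's key matrix `A` on top of the signal direction `v` gives an
invertible `(N+1) × (N+1)` matrix, then `W` is independent of the pair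
`(W + v·sᵀ, A·sᵀ)`, i.e. `I(W ; (W + v·sᵀ, A·sᵀ)) = 0`. -/
theorem one_time_pad_security
    {F : Type} [Field F] [Fintype F] [DecidableEq F] {N : ℕ} (hN : 1 ≤ N)
    (μ : FinProbSpace) (s : μ.Ω → (Fin (N + 1) → F)) (W : μ.Ω → F)
    (hs : ∀ x : Fin (N + 1) → F, μ.prob s x = 1 / (Fintype.card F : ℝ) ^ (N + 1))
    (hW : ∀ w : F, μ.prob W w = 1 / (Fintype.card F : ℝ))
    (hIndep : μ.IndepRV s W)
    (v : Fin (N + 1) → F) (A : Matrix (Fin N) (Fin (N + 1)) F)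
    (hStack : IsUnit (Matrix.of fun (i j : Fin (N + 1)) =>
      if h : (i : ℕ) < N then A ⟨(i : ℕ), h⟩ j else v j)) :
    μ.MI W (fun ω => (W ω + ∑ j, v j * s ω j, fun i : Fin N => ∑ j, A i j * s ω j)) = 0 := by
  classical
  set q : ℝ := (Fintype.card F : ℝ) with hq
  have hq0 : q ≠ 0 := by
    simp [hq, Nat.cast_eq_zero, Fintype.card_ne_zero]
  set M : Matrix (Fin (N + 1)) (Fin (N + 1)) F :=
    Matrix.of fun (i j : Fin (N + 1)) =>
      if h : (i : ℕ) < N then A ⟨(i : ℕ), h⟩ j else v j with hM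
  set Y : μ.Ω → F × (Fin N → F) :=
    fun ω => (W ω + ∑ j, v j * s ω j, fun i : Fin N => ∑ j, A i j * s ω j) with hY
  have hMdet : IsUnit M.det := (Matrix.isUnit_iff_isUnit_det M).mp hStack
  -- joint pmf of (W, Y)
  have key : ∀ (w c : F) (k : Fin N → F),
      μ.prob (fun ω => (W ω, Y ω)) (w, (c, k)) = 1 / q ^ (N + 1) * (1 / q) := by
    intro w c k
    set b : Fin (N + 1) → F := fun i => if h : (i : ℕ) < N then k ⟨(i : ℕ), h⟩ else c - w
      with hb
    set x₀ : Fin (N + 1) → F := M⁻¹.mulVec b with hx₀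
    have hiff : ∀ ω : μ.Ω, (W ω, Y ω) = (w, (c, k)) ↔ (s ω, W ω) = (x₀, w) := by
      intro ω
      simp only [hY, Prod.ext_iff]
      constructor
      · rintro ⟨hw, hc, hk⟩
        refine ⟨?_, hw⟩
        have hsol : M.mulVec (s ω) = b := by
          funext i
          simp only [Matrix.mulVec, dotProduct, hM, Matrix.of_apply, hb]
          by_cases h : (i : ℕ) < N
          · simp only [h, dif_pos]
            exact congrFun hk ⟨(i : ℕ), h⟩
          · simp only [h, dif_neg, not_false_iff]
            have : W ω + ∑ j, v j * s ω j = c := hc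
            rw [hw] at this
            linear_combination this
        rw [hx₀, ← hsol, Matrix.mulVec_mulVec, Matrix.nonsing_inv_mul M hMdet,
          Matrix.one_mulVec]
      · rintro ⟨hsx, hw⟩
        have hsol : M.mulVec x₀ = b := by
          rw [hx₀, Matrix.mulVec_mulVec, Matrix.mul_nonsing_inv M hMdet,
            Matrix.one_mulVec]
        refine ⟨hw, ?_, ?_⟩
        · have := congrFun hsol ⟨N, Nat.lt_succ_self N⟩
          simp only [Matrix.mulVec, dotProduct, hM, Matrix.of_apply, hb,
            lt_irrefl, dif_neg, not_false_iff] at this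
          rw [hsx, hw]
          have h2 : ∑ j, v j * x₀ j = c - w := this
          rw [h2]; ring
        · funext i
          have hi : ((⟨(i : ℕ), Nat.lt_succ_of_lt i.isLt⟩ : Fin (N + 1)) : ℕ) < N := i.isLt
          have := congrFun hsol ⟨(i : ℕ), Nat.lt_succ_of_lt i.isLt⟩
          simp only [Matrix.mulVec, dotProduct, hM, Matrix.of_apply, hb, hi, dif_pos] at this
          rw [hsx]
          exact this
    have : μ.prob (fun ω => (W ω, Y ω)) (w, (c, k))
        = μ.prob (fun ω => (s ω, W ω)) (x₀, w) := by
      letI := μ.fin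
      unfold FinProbSpace.prob
      apply Finset.sum_congr rfl
      intro ω _
      exact if_congr (hiff ω) rfl rfl
    rw [this, hIndep x₀ w, hs x₀, hW w]
  have hprobY : ∀ (c : F) (k : Fin N → F),
      μ.prob Y (c, k) = q * (1 / q ^ (N + 1) * (1 / q)) := by
    intro c k
    rw [prob_marginal μ W Y (c, k)]
    simp only [key]
    rw [Finset.sum_const, Finset.card_univ, nsmul_eq_mul, hq]
  apply MI_eq_zero_of_indep
  intro w p
  obtain ⟨c, k⟩ := p
  rw [key w c k, hW w, hprobY c k]
  field_simp
end

section
/- Let F be a field, K ≥ 2, 1 ≤ N ≤ K − 1, and set M = K − N + 1. Let V be a K × M matrix over F such that every M × M submatrix formed by M of its rows is invertible (an MDS matrix). Then for every subset Q ⊆ {1, …, K} with |Q| = N there exists a nonzero column vector w ∈ F^M such that V(e, :)·w = 0 for every e ∈ {1, …, K} \ Q, and V(q, :)·w ≠ 0 for every q ∈ Q. -/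
open scoped BigOperators

/-- **Precoding lemma for MDS key assignments** (achievability of Theorem 3 at
minimum key storage α = 1 with β = K − N + 1). If `V` is a `K × (K−N+1)` MDS
matrix (every `(K−N+1) × (K−N+1)` submatrix formed by distinct rows is
invertible), then for every qualified set `Q` of size `N` there exists a
nonzero precoding vector `w` orthogonal to the key row of every eavesdropper
`e ∉ Q` and non-orthogonal to the key row of every qualified receiver `q ∈ Q`. -/
theorem mds_precoding {F : Type} [Field F] {K N : ℕ}
    (hK : 2 ≤ K) (hN1 : 1 ≤ N) (hNK : N ≤ K - 1)
    (V : Matrix (Fin K) (Fin (K - N + 1)) F)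
    (hMDS : ∀ f : Fin (K - N + 1) → Fin K, Function.Injective f →
      IsUnit (Matrix.det (Matrix.of fun i j => V (f i) j)))
    (Q : Finset (Fin K)) (hQ : Q.card = N) :
    ∃ w : Fin (K - N + 1) → F, w ≠ 0
      ∧ (∀ e, e ∉ Q → ∑ j, V e j * w j = 0)
      ∧ (∀ q ∈ Q, ∑ j, V q j * w j ≠ 0) := by
  classical
  have hcompl : (Qᶜ : Finset (Fin K)).card = K - N := by
    rw [Finset.card_compl, hQ, Fintype.card_fin]
  -- build the linear map w ↦ (e ↦ ∑ j V e j * w j) on the complement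
  set B : Matrix (Qᶜ : Finset (Fin K)) (Fin (K - N + 1)) F :=
    fun e j => V e j with hB
  have hnotinj : ¬ Function.Injective B.mulVecLin := by
    intro hinj
    have hle := LinearMap.finrank_le_finrank_of_injective hinj
    simp only [Module.finrank_pi, Fintype.card_fin, Fintype.card_coe, hcompl] at hle
    omega
  have : ∃ w : Fin (K - N + 1) → F, w ≠ 0 ∧ B.mulVecLin w = 0 := by
    rw [← LinearMap.ker_eq_bot] at hnotinj
    rcases Submodule.exists_mem_ne_zero_of_ne_bot hnotinj with ⟨w, hw, hw0⟩
    exact ⟨w, hw0, hw⟩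
  obtain ⟨w, hw0, hker⟩ := this
  have heav : ∀ e, e ∉ Q → ∑ j, V e j * w j = 0 := by
    intro e he
    have he' : e ∈ Qᶜ := Finset.mem_compl.2 he
    have := congrFun hker ⟨e, he'⟩
    change (B.mulVec w) ⟨e, he'⟩ = 0 at this
    simpa [Matrix.mulVecLin_apply, Matrix.mulVec, dotProduct, hB] using this
  refine ⟨w, hw0, heav, ?_⟩
  intro q hq hzero
  -- build the M×M submatrix on Qᶜ ∪ {q}
  have hqc : q ∉ (Qᶜ : Finset (Fin K)) := by simpa using hq
  set S : Finset (Fin K) := insert q Qᶜ with hS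
  have hScard : S.card = K - N + 1 := by
    rw [hS, Finset.card_insert_of_notMem hqc, hcompl]
  let g : Fin (K - N + 1) ↪o S := S.orderIsoOfFin hScard |>.toOrderEmbedding
  let f : Fin (K - N + 1) → Fin K := fun i => (g i : Fin K)
  have hfinj : Function.Injective f := by
    intro a b hab
    exact g.injective (Subtype.ext hab)
  have hdet := hMDS f hfinj
  have hinv : Function.Injective (Matrix.of fun i j => V (f i) j).mulVec := by
    have := Matrix.invertibleOfIsUnitDet _ hdet
    exact Matrix.mulVec_injective_of_invertible _
  have hrowzero : (Matrix.of fun i j => V (f i) j).mulVec w = 0 := by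
    funext i
    have hfi : f i ∈ S := (g i).2
    rw [hS, Finset.mem_insert] at hfi
    have : ∑ j, V (f i) j * w j = 0 := by
      rcases hfi with h | h
      · rw [h]; exact hzero
      · exact heav _ (Finset.mem_compl.1 h)
    simpa [Matrix.mulVec, dotProduct] using this
  have : w = 0 := hinv (by simpa using hrowzero)
  exact hw0 this
end
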